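/- Suppose that every pairwise intersection |M_α ∩ M_β| (1 ≤ α < β ≤ 5) has odd cardinality at most 3, and that no element of X belongs to four or more of the five sets. Then exactly nine of the ten pairs satisfy |M_α ∩ M_β| = 3 and exactly one pair satisfies |M_α ∩ M_β| = 1; moreover, every element of X belongs to exactly two or exactly three of the five sets, with exactly 7 elements belonging to exactly three of them and exactly 7 elements belonging to exactly two. -/

import Mathlib

/-!
Let `n x` be the number of the five sets containing `x`. Admissibility makes `σ` swap membership
in every `M α`, so `n x + n (σ x) = 5`; with `n ≤ 3` this forces `n x ∈ {2, 3}`, and `σ` matches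
the elements with `n = 3` to those with `n = 2`, seven of each. Counting incidences
`x ∈ M α ∩ M β` both ways gives `∑_{α<β} |M α ∩ M β| = ∑_x C(n x, 2) = 7 · 3 + 7 · 1 = 28`;
ten summands, each `1` or `3`, add up to `28` only as nine `3`s and one `1`.
-/

open Finset

section MemCount

variable {ι X : Type*} [Fintype ι] [DecidableEq X]

def memCount (M : ι → Finset X) (x : X) : ℕ := #{α | x ∈ M α}

lemma memCount_add_memCount_of_mem_iff_notMem {M : ι → Finset X} {σ : X → X}
    (hM : ∀ α x, x ∈ M α ↔ σ x ∉ M α) (x : X) :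
    memCount M x + memCount M (σ x) = Fintype.card ι := by
  have hswap : univ.filter (fun α => σ x ∈ M α) = univ.filter (fun α => x ∉ M α) :=
    filter_congr fun α _ => by rw [hM α x, not_not]
  rw [memCount, memCount, hswap, card_filter_add_card_filter_not, card_univ]

lemma card_memCount_eq_card_memCount_sub [Fintype X] {M : ι → Finset X} {σ : X → X}
    (hσ : Function.Involutive σ) (hM : ∀ α x, x ∈ M α ↔ σ x ∉ M α) {k : ℕ}
    (hk : k ≤ Fintype.card ι) :
    #{x | memCount M x = k} = #{x | memCount M x = Fintype.card ι - k} := by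
  have hsum := memCount_add_memCount_of_mem_iff_notMem hM
  refine card_nbij' σ σ (fun x hx => ?_) (fun x hx => ?_) (fun x _ => hσ x) (fun x _ => hσ x)
  · simp only [coe_filter, mem_univ, true_and, Set.mem_ofPred_eq] at hx ⊢
    have := hsum x
    omega
  · simp only [coe_filter, mem_univ, true_and, Set.mem_ofPred_eq] at hx ⊢
    have := hsum (σ x)
    rw [hσ x] at this
    omega

lemma sum_card_inter_eq_sum_choose_two [LinearOrder ι] [Fintype X] (M : ι → Finset X) :
    ∑ p ∈ ({p | p.1 < p.2} : Finset (ι × ι)), #(M p.1 ∩ M p.2) =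
      ∑ x, (memCount M x).choose 2 := by
  convert sum_card_bipartiteAbove_eq_sum_card_bipartiteBelow (s := {p : ι × ι | p.1 < p.2})
    (t := univ) (r := fun p x => x ∈ M p.1 ∩ M p.2) using 2 with p _ x _
  · rw [bipartiteAbove, filter_mem_eq_inter, univ_inter]
  · rw [memCount, ← card_product_filter_lt]
    congr 1
    ext p
    simp only [bipartiteBelow, mem_filter, mem_product, mem_univ, mem_inter, true_and]
    tauto

end MemCount

lemma sum_comp_eq_of_forall_eq_or_eq {α β : Type*} [DecidableEq β] {s : Finset α} {f : α → β}
    {a b : β} (hab : a ≠ b) (h : ∀ x ∈ s, f x = a ∨ f x = b) (g : β → ℕ) :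
    ∑ x ∈ s, g (f x) = #{x ∈ s | f x = a} * g a + #{x ∈ s | f x = b} * g b := by
  have hnot : {x ∈ s | ¬f x = a} = {x ∈ s | f x = b} :=
    filter_congr fun x hx => by rcases h x hx with h | h <;> simp [h, hab, hab.symm]
  rw [← sum_filter_add_sum_filter_not s (fun x => f x = a), hnot,
    sum_congr rfl fun x hx => congrArg g (mem_filter.1 hx).2,
    sum_congr rfl fun x hx => congrArg g (mem_filter.1 hx).2, sum_const, sum_const, smul_eq_mul,
    smul_eq_mul]

theorem fourteen_dim_five_spinors_general {X : Type*} [Fintype X] [DecidableEq X]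
    (hX : Fintype.card X = 14)
    (σ : X → X) (hσinv : ∀ x, σ (σ x) = x)
    (M : Fin 5 → Finset X)
    (hM : ∀ α, ∀ x : X, x ∈ M α ↔ σ x ∉ M α)
    (he : ∀ α β : Fin 5, α < β →
      Odd (M α ∩ M β).card ∧ (M α ∩ M β).card ≤ 3)
    (hocc : ∀ x : X, (univ.filter (fun α : Fin 5 => x ∈ M α)).card ≤ 3) :
    (univ.filter (fun p : Fin 5 × Fin 5 => p.1 < p.2 ∧ (M p.1 ∩ M p.2).card = 3)).card = 9 ∧
    (univ.filter (fun p : Fin 5 × Fin 5 => p.1 < p.2 ∧ (M p.1 ∩ M p.2).card = 1)).card = 1 ∧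
    (∀ x : X, (univ.filter (fun α : Fin 5 => x ∈ M α)).card = 2 ∨
      (univ.filter (fun α : Fin 5 => x ∈ M α)).card = 3) ∧
    (univ.filter (fun x : X => (univ.filter (fun α : Fin 5 => x ∈ M α)).card = 3)).card = 7 ∧
    (univ.filter (fun x : X => (univ.filter (fun α : Fin 5 => x ∈ M α)).card = 2)).card = 7 := by
  have hocc' : ∀ x, memCount M x ≤ 3 := hocc
  have hcount23 : ∀ x, memCount M x = 2 ∨ memCount M x = 3 := fun x => by
    have hsum : memCount M x + memCount M (σ x) = 5 := memCount_add_memCount_of_mem_iff_notMem hM x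
    have := hocc' x
    have := hocc' (σ x)
    omega
  have hinter13 : ∀ p ∈ ({p | p.1 < p.2} : Finset (Fin 5 × Fin 5)),
      #(M p.1 ∩ M p.2) = 3 ∨ #(M p.1 ∩ M p.2) = 1 := fun p hp => by
    obtain ⟨⟨k, hk⟩, hle⟩ := he p.1 p.2 (mem_filter.1 hp).2
    omega
  have hlevels : #{x | memCount M x = 3} = #{x | memCount M x = 2} :=
    card_memCount_eq_card_memCount_sub hσinv hM (k := 3) (by simp)
  have hX' := sum_comp_eq_of_forall_eq_or_eq (s := univ) (by decide) (fun x _ => hcount23 x) 1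
  have hincidences := sum_card_inter_eq_sum_choose_two M
  rw [sum_comp_eq_of_forall_eq_or_eq (by decide) (fun x _ => hcount23 x) (·.choose 2)] at hincidences
  have hpairsum := sum_comp_eq_of_forall_eq_or_eq (by decide) hinter13 id
  have hpairs := sum_comp_eq_of_forall_eq_or_eq (by decide) hinter13 1
  simp only [Pi.one_apply, sum_const, card_univ, smul_eq_mul, mul_one, hX, filter_filter, id,
    Nat.choose_two_right] at hX' hincidences hpairsum hpairs
  have hnumPairs : #({p | p.1 < p.2} : Finset (Fin 5 × Fin 5)) = 10 := by decide
  exact ⟨by omega, by omega, hcount23, (by omega : #{x | memCount M x = 3} = 7),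
    (by omega : #{x | memCount M x = 2} = 7)⟩

/-- In dimension fourteen (`|X| = 14`, `d = 7`): suppose five
admissible subsets are such that every pairwise intersection has odd cardinality at
most 3, and no element of `X` belongs to four or more of the five sets. Then exactly
nine of the ten pairs have intersection of size 3 and exactly one pair has intersection
of size 1; moreover every element belongs to exactly two or exactly three of the five
sets, with exactly 7 elements belonging to exactly three of them and exactly 7 elements
belonging to exactly two. -/
theorem fourteen_dim_five_spinors {X : Type*} [Fintype X] [DecidableEq X]
    (hX : Fintype.card X = 14)
    (σ : X → X) (hσinv : ∀ x, σ (σ x) = x) (hσfpf : ∀ x, σ x ≠ x)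
    (M : Fin 5 → Finset X)
    (hM : ∀ α, ∀ x : X, x ∈ M α ↔ σ x ∉ M α)
    (he : ∀ α β : Fin 5, α < β →
      Odd (M α ∩ M β).card ∧ (M α ∩ M β).card ≤ 3)
    (hocc : ∀ x : X, (univ.filter (fun α : Fin 5 => x ∈ M α)).card ≤ 3) :
    (univ.filter (fun p : Fin 5 × Fin 5 => p.1 < p.2 ∧ (M p.1 ∩ M p.2).card = 3)).card = 9 ∧
    (univ.filter (fun p : Fin 5 × Fin 5 => p.1 < p.2 ∧ (M p.1 ∩ M p.2).card = 1)).card = 1 ∧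
    (∀ x : X, (univ.filter (fun α : Fin 5 => x ∈ M α)).card = 2 ∨
      (univ.filter (fun α : Fin 5 => x ∈ M α)).card = 3) ∧
    (univ.filter (fun x : X => (univ.filter (fun α : Fin 5 => x ∈ M α)).card = 3)).card = 7 ∧
    (univ.filter (fun x : X => (univ.filter (fun α : Fin 5 => x ∈ M α)).card = 2)).card = 7 :=
  fourteen_dim_five_spinors_general hX σ hσinv M hM he hocc
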